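/- arXiv:1007.3767 — 4 statements merged into one kernel-verified Lean document; each statement's English description precedes it below -/
import Mathlib

section
/- Let 𝒳 = {X_1, …, X_t} be a finite set of events in a probability space with a negative dependency graph D = (𝒳, E), and suppose 𝒳 is partitioned into two types, 𝒳 = 𝒳_1 ⊔ 𝒳_2. Suppose there are integers ℓ_1, ℓ_2 and, for each s ∈ {1,2}, each j ∈ [ℓ_s] and each s' ∈ {1,2}, positive integers q_{s,j,s'}, such that for each s ∈ {1,2} and each X_i ∈ 𝒳_s the closed neighbourhood can be written as Γ_D*(X_i) = ⋃_{j∈[ℓ_s]} (Q_{i,j}^{(1)} ∪ Q_{i,j}^{(2)}), where Q_{i,j}^{(s')} ⊆ 𝒳_{s'}, |Q_{i,j}^{(s')}| ≤ q_{s,j,s'}, and Q_{i,j}^{(1)} ∪ Q_{i,j}^{(2)} is a clique in D. If there are positive real numbers μ_1, μ_2 such that for each s ∈ {1,2} and each X_i ∈ 𝒳_s one has P(X_i) ≤ μ_s / ∏_{j∈[ℓ_s]} (1 + μ_1·q_{s,j,1} + μ_2·q_{s,j,2}), then P(⋂_{i∈[t]} X_iᶜ) > 0. -/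
open MeasureTheory

/-- `D` is a negative dependency graph for the events `X i` with respect to `μ`. -/
def IsNegDepGraph {Ω : Type*} [MeasurableSpace Ω] (μ : Measure Ω) {t : ℕ}
    (X : Fin t → Set Ω) (D : SimpleGraph (Fin t)) : Prop :=
  ∀ (i : Fin t) (Z : Finset (Fin t)), (∀ j ∈ Z, j ≠ i ∧ ¬ D.Adj i j) →
    μ (X i ∩ ⋂ j ∈ Z, (X j)ᶜ) ≤ μ (X i) * μ (⋂ j ∈ Z, (X j)ᶜ)

/-!
Write `φ(Y)` for the independence polynomial of `D` on `Y` at the weights `w`, and `Γ*(a)` for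
the closed neighbourhood of `a`. By strong induction on `U` one shows, for `a ∉ U`,
`P(X a ∩ ⋂_{j ∈ U} (X j)ᶜ) · φ(Γ*(a) \ U) ≤ w a · P(⋂_{j ∈ U} (X j)ᶜ)`.
Negative dependence disposes of the events of `U` outside `Γ*(a)`; the remaining ones are added
one at a time, and adding `b` to the avoided events multiplies the probability by at least
`φ(Y \ {b}) / φ(Y)`, thanks to the deletion recurrence
`φ(Y) = φ(Y \ {b}) + w b · φ(Y \ Γ*(b))` and submultiplicativity `φ(A ∪ B) ≤ φ(A) φ(B)`.
Telescoping over all events gives `P(⋂ (X i)ᶜ) ≥ 1 / φ(all events) > 0`. For two types, the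
clique cover of `Γ*(i)` yields `φ(Γ*(i)) ≤ ∏_j (1 + w₁ q_{j,1} + w₂ q_{j,2})`, since a clique
contributes only its singletons.
-/

open Finset

namespace SimpleGraph

variable {V : Type*} {G : SimpleGraph V}

theorem isIndepSet_insert_iff {S : Set V} {y : V} (hy : y ∉ S) :
    G.IsIndepSet (insert y S) ↔ G.IsIndepSet S ∧ ∀ z ∈ S, ¬G.Adj y z := by
  rw [isIndepSet_iff, Set.pairwise_insert]
  exact and_congr_right' ⟨fun h z hz => (h z hz (ne_of_mem_of_not_mem hz hy).symm).1,
    fun h z hz _ => ⟨h z hz, fun h' => h z hz h'.symm⟩⟩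

variable [DecidableEq V] (G) (W : V → ℝ)

open Classical in
noncomputable def indepSubsets (Y : Finset V) : Finset (Finset V) :=
  Y.powerset.filter fun S => G.IsIndepSet S

/-- The independence polynomial of the subgraph induced on `Y`, evaluated at the weights `W`. -/
noncomputable def indepPoly (Y : Finset V) : ℝ :=
  ∑ S ∈ G.indepSubsets Y, ∏ y ∈ S, W y

variable {G W}

@[simp]
theorem mem_indepSubsets {Y S : Finset V} :
    S ∈ G.indepSubsets Y ↔ S ⊆ Y ∧ G.IsIndepSet (S : Set V) := by
  classical
  simp [indepSubsets]

@[simp]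
theorem indepPoly_empty : G.indepPoly W ∅ = 1 := by
  have : G.indepSubsets ∅ = {∅} := by ext; simp +contextual
  simp [indepPoly, this]

theorem indepPoly_mono (hW : ∀ v, 0 ≤ W v) {Y Y' : Finset V} (h : Y ⊆ Y') :
    G.indepPoly W Y ≤ G.indepPoly W Y' :=
  sum_le_sum_of_subset_of_nonneg
    (fun _ hS => mem_indepSubsets.mpr
      ⟨(mem_indepSubsets.mp hS).1.trans h, (mem_indepSubsets.mp hS).2⟩)
    fun _ _ _ => prod_nonneg fun y _ => hW y

theorem one_le_indepPoly (hW : ∀ v, 0 ≤ W v) (Y : Finset V) : 1 ≤ G.indepPoly W Y :=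
  indepPoly_empty (G := G) (W := W) ▸ indepPoly_mono hW (empty_subset Y)

theorem indepPoly_pos (hW : ∀ v, 0 ≤ W v) (Y : Finset V) : 0 < G.indepPoly W Y :=
  one_pos.trans_le (one_le_indepPoly hW Y)

theorem indepPoly_eq_erase_add [Fintype V] [DecidableRel G.Adj] {Y : Finset V} {y : V}
    (hy : y ∈ Y) : G.indepPoly W Y =
      G.indepPoly W (Y.erase y) + W y * G.indepPoly W (Y \ insert y (G.neighborFinset y)) := by
  rw [indepPoly, ← sum_filter_add_sum_filter_not _ (fun S => y ∉ S)]
  congr 1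
  · refine sum_congr (ext fun S => ?_) fun _ _ => rfl
    simp only [mem_filter, mem_indepSubsets, subset_erase]
    tauto
  · rw [indepPoly, mul_sum]
    refine sum_nbij' (fun S => S.erase y) (insert y) ?_ ?_ ?_ ?_ ?_
    · intro S hS
      simp only [mem_filter, mem_indepSubsets, not_not] at hS
      obtain ⟨⟨hSY, hS⟩, hyS⟩ := hS
      rw [← insert_erase hyS, coe_insert, isIndepSet_insert_iff (by simp)] at hS
      refine mem_indepSubsets.mpr ⟨fun z hz => ?_, hS.1⟩
      simp only [mem_sdiff, mem_insert, mem_neighborFinset, not_or]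
      exact ⟨hSY (mem_of_mem_erase hz), ne_of_mem_erase hz, hS.2 z hz⟩
    · intro S hS
      simp only [mem_indepSubsets, subset_sdiff, disjoint_insert_right] at hS
      obtain ⟨⟨hSY, hyS, hSN⟩, hS⟩ := hS
      simp only [mem_filter, mem_indepSubsets, mem_insert_self, not_true_eq_false,
        not_false_eq_true, and_true]
      refine ⟨insert_subset hy hSY, ?_⟩
      rw [coe_insert, isIndepSet_insert_iff (by simpa using hyS)]
      exact ⟨hS, fun z hz h => Finset.disjoint_left.mp hSN hz ((G.mem_neighborFinset y z).mpr h)⟩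
    · intro S hS
      exact insert_erase (not_not.mp (mem_filter.mp hS).2)
    · intro S hS
      simp only [mem_indepSubsets, subset_sdiff, disjoint_insert_right] at hS
      exact erase_insert hS.1.2.1
    · intro S hS
      exact (mul_prod_erase S W (not_not.mp (mem_filter.mp hS).2)).symm

theorem indepPoly_union_le (hW : ∀ v, 0 ≤ W v) (A B : Finset V) :
    G.indepPoly W (A ∪ B) ≤ G.indepPoly W A * G.indepPoly W B := by
  have hinj : Set.InjOn (fun S : Finset V => (S ∩ A, S \ A)) (G.indepSubsets (A ∪ B)) :=
    fun S _ S' _ h => by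
      simp only [Prod.mk.injEq] at h
      rw [← sdiff_union_inter S A, ← sdiff_union_inter S' A, h.1, h.2]
  calc G.indepPoly W (A ∪ B)
      = ∑ S ∈ G.indepSubsets (A ∪ B), (∏ y ∈ S ∩ A, W y) * ∏ y ∈ S \ A, W y := by
        simp only [prod_inter_mul_prod_sdiff, indepPoly]
    _ = ∑ p ∈ (G.indepSubsets (A ∪ B)).image fun S => (S ∩ A, S \ A),
          (∏ y ∈ p.1, W y) * ∏ y ∈ p.2, W y := by rw [sum_image hinj]
    _ ≤ ∑ p ∈ G.indepSubsets A ×ˢ G.indepSubsets B, (∏ y ∈ p.1, W y) * ∏ y ∈ p.2, W y := by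
        refine sum_le_sum_of_subset_of_nonneg ?_ fun p _ _ =>
          mul_nonneg (prod_nonneg fun y _ => hW y) (prod_nonneg fun y _ => hW y)
        intro p hp
        obtain ⟨S, hS, rfl⟩ := mem_image.mp hp
        obtain ⟨hSAB, hS⟩ := mem_indepSubsets.mp hS
        refine mem_product.mpr ⟨mem_indepSubsets.mpr ⟨inter_subset_right, hS.mono (by simp)⟩,
          mem_indepSubsets.mpr ⟨sdiff_le_iff.mpr hSAB, hS.mono (by simp)⟩⟩
    _ = G.indepPoly W A * G.indepPoly W B := by
        rw [sum_product, indepPoly, indepPoly, sum_mul_sum]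

theorem indepPoly_biUnion_le {ι : Type*} [DecidableEq ι] (hW : ∀ v, 0 ≤ W v)
    (J : Finset ι) (B : ι → Finset V) :
    G.indepPoly W (J.biUnion B) ≤ ∏ j ∈ J, G.indepPoly W (B j) := by
  induction J using Finset.induction_on with
  | empty => simp
  | insert a J ha ih =>
    rw [biUnion_insert, prod_insert ha]
    exact (indepPoly_union_le hW _ _).trans
      (mul_le_mul_of_nonneg_left ih (indepPoly_pos hW _).le)

theorem indepPoly_of_isClique {C : Finset V} (hC : G.IsClique (C : Set V)) :
    G.indepPoly W C = 1 + ∑ y ∈ C, W y := by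
  have hsub : G.indepSubsets C = insert ∅ (C.image fun y => {y}) := by
    ext S
    simp only [mem_indepSubsets, mem_insert, mem_image]
    constructor
    · rintro ⟨hSC, hS⟩
      obtain rfl | ⟨a, ha⟩ := S.eq_empty_or_nonempty
      · exact Or.inl rfl
      refine Or.inr ⟨a, hSC ha, (eq_singleton_iff_unique_mem.mpr ⟨ha, fun b hb => ?_⟩).symm⟩
      by_contra hba
      exact hS hb ha hba (hC (hSC hb) (hSC ha) hba)
    · rintro (rfl | ⟨a, ha, rfl⟩)
      · simp
      · simp [ha]
  rw [indepPoly, hsub, sum_insert (by simp), sum_image (fun _ _ _ _ h => singleton_injective h)]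
  simp

end SimpleGraph

open SimpleGraph

section NoneOf

variable {Ω ι : Type*} (X : ι → Set Ω)

def noneOf (Z : Finset ι) : Set Ω := ⋂ j ∈ Z, (X j)ᶜ

variable {X}

theorem noneOf_anti {Z Z' : Finset ι} (h : Z ⊆ Z') : noneOf X Z' ⊆ noneOf X Z :=
  Set.biInter_subset_biInter_left h

theorem noneOf_insert [DecidableEq ι] (a : ι) (Z : Finset ι) :
    noneOf X (insert a Z) = noneOf X Z \ X a := by
  rw [noneOf, noneOf, Finset.set_biInter_insert, Set.sdiff_eq, Set.inter_comm]

theorem measureReal_noneOf_sub_le_insert [MeasurableSpace Ω] [DecidableEq ι] (μ : Measure Ω)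
    [IsFiniteMeasure μ] (a : ι) (Z : Finset ι) :
    μ.real (noneOf X Z) - μ.real (X a ∩ noneOf X Z) ≤ μ.real (noneOf X (insert a Z)) := by
  have h : noneOf X Z \ (X a ∩ noneOf X Z) = noneOf X (insert a Z) := by
    rw [noneOf_insert]
    ext
    simp +contextual
  exact h ▸ le_measureReal_sdiff

end NoneOf

section ClusterExpansion

variable {Ω V : Type*} [MeasurableSpace Ω] (μ : Measure Ω) [IsFiniteMeasure μ]
  (X : V → Set Ω) [Fintype V] [DecidableEq V] (D : SimpleGraph V) [DecidableRel D.Adj]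
  (W : V → ℝ)

/-- `P(X a | none of U) ≤ W a / φ(Γ*(a) \ U)`, multiplied out so that it stays meaningful when
`none of U` is a null event. -/
def CondBound (a : V) (U : Finset V) : Prop :=
  μ.real (X a ∩ noneOf X U) * D.indepPoly W (insert a (D.neighborFinset a) \ U) ≤
    W a * μ.real (noneOf X U)

variable {μ X D W}

theorem CondBound.indepPoly_erase_mul_le (hW : ∀ v, 0 ≤ W v) {a : V} {U Y : Finset V}
    (h : CondBound μ X D W a U) (ha : a ∈ Y) (hYU : Disjoint Y U) :
    D.indepPoly W (Y.erase a) * μ.real (noneOf X U) ≤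
      D.indepPoly W Y * μ.real (noneOf X (insert a U)) := by
  set N := insert a (D.neighborFinset a)
  have hsplit : D.indepPoly W Y ≤ D.indepPoly W (Y \ N) * D.indepPoly W (N \ U) := by
    refine (indepPoly_mono hW fun y hy => ?_).trans (indepPoly_union_le hW _ _)
    by_cases hyN : y ∈ N
    · exact mem_union_right _ (mem_sdiff.mpr ⟨hyN, disjoint_left.mp hYU hy⟩)
    · exact mem_union_left _ (mem_sdiff.mpr ⟨hy, hyN⟩)
  have hX : D.indepPoly W Y * μ.real (X a ∩ noneOf X U) ≤
      W a * D.indepPoly W (Y \ N) * μ.real (noneOf X U) :=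
    calc D.indepPoly W Y * μ.real (X a ∩ noneOf X U)
        ≤ D.indepPoly W (Y \ N) * D.indepPoly W (N \ U) * μ.real (X a ∩ noneOf X U) :=
          mul_le_mul_of_nonneg_right hsplit measureReal_nonneg
      _ = D.indepPoly W (Y \ N) * (μ.real (X a ∩ noneOf X U) * D.indepPoly W (N \ U)) := by
          ring
      _ ≤ D.indepPoly W (Y \ N) * (W a * μ.real (noneOf X U)) :=
          mul_le_mul_of_nonneg_left h (indepPoly_pos hW _).le
      _ = W a * D.indepPoly W (Y \ N) * μ.real (noneOf X U) := by ring
  calc D.indepPoly W (Y.erase a) * μ.real (noneOf X U)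
      = D.indepPoly W Y * μ.real (noneOf X U) -
          W a * D.indepPoly W (Y \ N) * μ.real (noneOf X U) := by
        rw [indepPoly_eq_erase_add ha]; ring
    _ ≤ D.indepPoly W Y * (μ.real (noneOf X U) - μ.real (X a ∩ noneOf X U)) := by
        linarith
    _ ≤ D.indepPoly W Y * μ.real (noneOf X (insert a U)) :=
        mul_le_mul_of_nonneg_left (measureReal_noneOf_sub_le_insert μ a U)
          (indepPoly_pos hW _).le

theorem indepPoly_sdiff_mul_le (hW : ∀ v, 0 ≤ W v) {Y T U : Finset V} (hTY : T ⊆ Y)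
    (hYU : Disjoint Y U) (h : ∀ a ∈ T, ∀ S ⊆ T, a ∉ S → CondBound μ X D W a (S ∪ U)) :
    D.indepPoly W (Y \ T) * μ.real (noneOf X U) ≤
      D.indepPoly W Y * μ.real (noneOf X (T ∪ U)) := by
  induction T using Finset.induction_on with
  | empty => simp
  | insert a S haS ih =>
    have hS := ih ((subset_insert a S).trans hTY)
      fun b hb S' hS' => h b (mem_insert_of_mem hb) S' (hS'.trans (subset_insert a S))
    have hstep :=
      (h a (mem_insert_self a S) S (subset_insert a S) haS).indepPoly_erase_mul_le hW
      (mem_sdiff.mpr ⟨hTY (mem_insert_self a S), haS⟩)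
      (disjoint_union_right.mpr ⟨sdiff_disjoint, disjoint_of_subset_left sdiff_subset hYU⟩)
    rw [← sdiff_insert, ← insert_union] at hstep
    have hpos := indepPoly_pos (G := D) hW (Y \ S)
    refine le_of_mul_le_mul_left ?_ hpos
    calc D.indepPoly W (Y \ S) * (D.indepPoly W (Y \ insert a S) * μ.real (noneOf X U))
        = D.indepPoly W (Y \ insert a S) * (D.indepPoly W (Y \ S) * μ.real (noneOf X U)) := by
          ring
      _ ≤ D.indepPoly W (Y \ insert a S) * (D.indepPoly W Y * μ.real (noneOf X (S ∪ U))) :=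
          mul_le_mul_of_nonneg_left hS (indepPoly_pos hW _).le
      _ = D.indepPoly W Y * (D.indepPoly W (Y \ insert a S) * μ.real (noneOf X (S ∪ U))) := by
          ring
      _ ≤ D.indepPoly W Y * (D.indepPoly W (Y \ S) * μ.real (noneOf X (insert a S ∪ U))) :=
          mul_le_mul_of_nonneg_left hstep (indepPoly_pos hW _).le
      _ = _ := by ring

end ClusterExpansion

section NegDep

variable {Ω : Type*} [MeasurableSpace Ω] {μ : Measure Ω} {t : ℕ} {X : Fin t → Set Ω}
  {D : SimpleGraph (Fin t)} {W : Fin t → ℝ}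

theorem IsNegDepGraph.measureReal_inter_noneOf_le [IsFiniteMeasure μ] (hD : IsNegDepGraph μ X D)
    {i : Fin t} {Z : Finset (Fin t)} (hZ : ∀ j ∈ Z, j ≠ i ∧ ¬D.Adj i j) :
    μ.real (X i ∩ noneOf X Z) ≤ μ.real (X i) * μ.real (noneOf X Z) := by
  simpa only [noneOf, measureReal_def, ENNReal.toReal_mul] using
    ENNReal.toReal_mono (by finiteness) (hD i Z hZ)

theorem IsNegDepGraph.condBound [IsFiniteMeasure μ] [DecidableRel D.Adj]
    (hD : IsNegDepGraph μ X D) (hW : ∀ v, 0 ≤ W v)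
    (hX : ∀ i, μ.real (X i) ≤ W i / D.indepPoly W (insert i (D.neighborFinset i)))
    (U : Finset (Fin t)) {a : Fin t} (ha : a ∉ U) : CondBound μ X D W a U := by
  induction U using Finset.strongInduction generalizing a with
  | H U ih =>
    set N := insert a (D.neighborFinset a)
    have hpeel : D.indepPoly W (N \ U) * μ.real (noneOf X (U \ N)) ≤
        D.indepPoly W N * μ.real (noneOf X U) := by
      have h := indepPoly_sdiff_mul_le (μ := μ) (X := X) (T := U ∩ N) (U := U \ N) hW
        inter_subset_right disjoint_sdiff fun b hb S hS hbS => by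
          have hbSN : b ∉ S ∪ U \ N := by simp [hbS, (mem_inter.mp hb).2]
          refine ih _ ((ssubset_iff_of_subset ?_).mpr ⟨b, (mem_inter.mp hb).1, hbSN⟩) hbSN
          exact union_subset (hS.trans inter_subset_left) sdiff_subset
      rwa [sdiff_inter_self_right, ← inf_eq_inter, ← sup_eq_union, sup_inf_sdiff] at h
    have hneg : μ.real (X a ∩ noneOf X U) ≤ μ.real (X a) * μ.real (noneOf X (U \ N)) := by
      refine (measureReal_mono (Set.inter_subset_inter_right _ (noneOf_anti sdiff_subset))).trans
        (hD.measureReal_inter_noneOf_le fun j hj => ?_)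
      simpa [N, not_or, eq_comm] using (mem_sdiff.mp hj).2
    have hNpos := indepPoly_pos (G := D) hW N
    calc μ.real (X a ∩ noneOf X U) * D.indepPoly W (N \ U)
        ≤ W a / D.indepPoly W N * μ.real (noneOf X (U \ N)) * D.indepPoly W (N \ U) := by
          gcongr
          · exact (indepPoly_pos hW _).le
          · exact hneg.trans (mul_le_mul_of_nonneg_right (hX a) measureReal_nonneg)
      _ = W a / D.indepPoly W N * (D.indepPoly W (N \ U) * μ.real (noneOf X (U \ N))) := by ring
      _ ≤ W a / D.indepPoly W N * (D.indepPoly W N * μ.real (noneOf X U)) :=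
          mul_le_mul_of_nonneg_left hpeel (div_nonneg (hW a) hNpos.le)
      _ = W a * μ.real (noneOf X U) := by field_simp

theorem IsNegDepGraph.measure_iInter_compl_pos [IsProbabilityMeasure μ] [DecidableRel D.Adj]
    (hD : IsNegDepGraph μ X D) (hW : ∀ v, 0 ≤ W v)
    (hX : ∀ i, μ.real (X i) ≤ W i / D.indepPoly W (insert i (D.neighborFinset i))) :
    0 < μ (⋂ i, (X i)ᶜ) := by
  have h := indepPoly_sdiff_mul_le (μ := μ) (X := X) (D := D) hW (Subset.refl univ)
    (disjoint_empty_right univ) fun a _ S _ ha => hD.condBound hW hX _ (by simpa using ha)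
  simp only [Finset.sdiff_self, indepPoly_empty, noneOf, notMem_empty, Set.iInter_of_empty,
    Set.iInter_univ, probReal_univ, union_empty, mem_univ, Set.iInter_true, one_mul] at h
  have hpos : 0 < μ.real (⋂ i, (X i)ᶜ) := by
    nlinarith [indepPoly_pos (G := D) hW univ, measureReal_nonneg (μ := μ) (s := ⋂ i, (X i)ᶜ)]
  exact (ENNReal.toReal_pos_iff.mp hpos).1

end NegDep

theorem sum_comp_le_mul_card_of_forall_eq {V κ : Type*} {s : Finset V} {typ : V → κ} {c : κ}
    (h : ∀ v ∈ s, typ v = c) (w : κ → ℝ) (hw : 0 ≤ w c) {n : ℕ} (hn : #s ≤ n) :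
    ∑ v ∈ s, w (typ v) ≤ w c * n := by
  rw [sum_congr rfl fun v hv => congrArg w (h v hv), sum_const, nsmul_eq_mul, mul_comm]
  gcongr

theorem cluster_expansion_local_lemma_two_types_general
    {Ω : Type*} [MeasurableSpace Ω] (μ : Measure Ω) [IsProbabilityMeasure μ]
    {t : ℕ} (X : Fin t → Set Ω)
    (D : SimpleGraph (Fin t)) [DecidableRel D.Adj]
    (hD : IsNegDepGraph μ X D)
    (typ : Fin t → Fin 2)
    (ℓ : Fin 2 → ℕ)
    (q : (s : Fin 2) → Fin (ℓ s) → Fin 2 → ℕ)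
    (Q : (i : Fin t) → Fin (ℓ (typ i)) → Fin 2 → Finset (Fin t))
    (htype : ∀ i j s', ∀ m ∈ Q i j s', typ m = s')
    (hcard : ∀ i j s', (Q i j s').card ≤ q (typ i) j s')
    (hcover : ∀ i, insert i (D.neighborFinset i) =
      Finset.univ.biUnion (fun j => Q i j 0 ∪ Q i j 1))
    (hclique : ∀ i j, D.IsClique ((Q i j 0 ∪ Q i j 1 : Finset (Fin t)) : Set (Fin t)))
    (w : Fin 2 → ℝ) (hw : ∀ s, 0 < w s)
    (hP : ∀ i, μ (X i) ≤ ENNReal.ofReal (w (typ i) /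
      ∏ j : Fin (ℓ (typ i)), (1 + w 0 * q (typ i) j 0 + w 1 * q (typ i) j 1))) :
    0 < μ (⋂ i, (X i)ᶜ) := by
  have hW : ∀ i, 0 ≤ w (typ i) := fun i => (hw _).le
  refine hD.measure_iInter_compl_pos hW fun i => ?_
  have hclusters : D.indepPoly (fun v => w (typ v)) (insert i (D.neighborFinset i)) ≤
      ∏ j : Fin (ℓ (typ i)), (1 + w 0 * q (typ i) j 0 + w 1 * q (typ i) j 1) := by
    rw [hcover i]
    refine (indepPoly_biUnion_le hW _ _).trans
      (prod_le_prod (fun _ _ => (indepPoly_pos hW _).le) fun j _ => ?_)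
    rw [indepPoly_of_isClique (hclique i j), add_assoc, add_le_add_iff_left]
    have hQ : ∀ s', ∑ v ∈ Q i j s', w (typ v) ≤ w s' * q (typ i) j s' := fun s' =>
      sum_comp_le_mul_card_of_forall_eq (htype i j s') w (hw s').le (hcard i j s')
    have hinter : 0 ≤ ∑ v ∈ Q i j 0 ∩ Q i j 1, w (typ v) := sum_nonneg fun v _ => hW v
    linarith [hQ 0, hQ 1,
      sum_union_inter (s₁ := Q i j 0) (s₂ := Q i j 1) (f := fun v => w (typ v))]
  have hφ := indepPoly_pos (G := D) hW (insert i (D.neighborFinset i))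
  exact (ENNReal.toReal_le_of_le_ofReal (div_nonneg (hw _).le (hφ.le.trans hclusters))
    (hP i)).trans (div_le_div_of_nonneg_left (hw _).le hφ hclusters)

/-- **Remark after Lemma 10, second part** (condition (4')): the events are partitioned
into two types (given by `typ`); for an event `X i` of type `s = typ i` its closed
neighbourhood in the negative dependency graph `D` is a union over `j ∈ [ℓ s]` of sets
`Q i j 0 ∪ Q i j 1`, where `Q i j s'` consists of events of type `s'`, has size at most
`q s j s'`, and each `Q i j 0 ∪ Q i j 1` is a clique in `D`.  If there are `w 0, w 1 > 0`
with `P(X i) ≤ w (typ i) / Π_j (1 + w 0 · q (typ i) j 0 + w 1 · q (typ i) j 1)` for all `i`,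
then with positive probability no event occurs. -/
theorem cluster_expansion_local_lemma_two_types
    {Ω : Type*} [MeasurableSpace Ω] (μ : Measure Ω) [IsProbabilityMeasure μ]
    {t : ℕ} (X : Fin t → Set Ω) (hmeas : ∀ i, MeasurableSet (X i))
    (D : SimpleGraph (Fin t)) [DecidableRel D.Adj]
    (hD : IsNegDepGraph μ X D)
    (typ : Fin t → Fin 2)
    (ℓ : Fin 2 → ℕ)
    (q : (s : Fin 2) → Fin (ℓ s) → Fin 2 → ℕ) (hq : ∀ s j s', 0 < q s j s')
    (Q : (i : Fin t) → Fin (ℓ (typ i)) → Fin 2 → Finset (Fin t))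
    (htype : ∀ i j s', ∀ m ∈ Q i j s', typ m = s')
    (hcard : ∀ i j s', (Q i j s').card ≤ q (typ i) j s')
    (hcover : ∀ i, insert i (D.neighborFinset i) =
      Finset.univ.biUnion (fun j => Q i j 0 ∪ Q i j 1))
    (hclique : ∀ i j, D.IsClique ((Q i j 0 ∪ Q i j 1 : Finset (Fin t)) : Set (Fin t)))
    (w : Fin 2 → ℝ) (hw : ∀ s, 0 < w s)
    (hP : ∀ i, μ (X i) ≤ ENNReal.ofReal (w (typ i) /
      ∏ j : Fin (ℓ (typ i)), (1 + w 0 * q (typ i) j 0 + w 1 * q (typ i) j 1))) :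
    0 < μ (⋂ i, (X i)ᶜ) :=
  cluster_expansion_local_lemma_two_types_general μ X D hD typ ℓ q Q htype hcard hcover hclique w hw
    hP
end

section
/- Let A and B be finite sets with |A| ≤ |B|, and consider the uniform probability measure on the set ℐ(A,B) of injections from A to B. Let 𝒳 = {X_1, …, X_t} be a finite set of canonical events for ℐ(A,B). Then the graph D on vertex set 𝒳 whose edges are exactly the pairs {X_i, X_j} such that X_i and X_j conflict is a negative dependency graph for 𝒳. -/
/-- The probability of a set of injections `S ⊆ ℐ(A,B)` under the uniform measure on
`ℐ(A,B) = A ↪ B`. -/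
noncomputable def uniformProb {A B : Type*} (S : Set (A ↪ B)) : ℝ :=
  S.ncard / Nat.card (A ↪ B)

open scoped Classical

/-- Extend an equivalence between two subsets of a fintype to a permutation fixing
everything outside the union. -/
noncomputable def extendPermAux {B : Type*} [Fintype B] {s t : Set B} (e : ↥s ≃ ↥t) :
    Equiv.Perm B :=
  Equiv.Perm.subtypeCongr (p := fun x => x ∈ s ∪ t)
    (Equiv.extendSubtype
      (p := fun x : {x // x ∈ s ∪ t} => (x : B) ∈ s)
      (q := fun x : {x // x ∈ s ∪ t} => (x : B) ∈ t)
      (((⟨fun x => ⟨x.1.1, x.2⟩, fun y => ⟨⟨y.1, Or.inl y.2⟩, y.2⟩,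
          fun _ => rfl, fun _ => rfl⟩ :
        {x : {x // x ∈ s ∪ t} // (x : B) ∈ s} ≃ ↥s)).trans
        (e.trans
          (⟨fun y => ⟨⟨y.1, Or.inr y.2⟩, y.2⟩, fun x => ⟨x.1.1, x.2⟩,
            fun _ => rfl, fun _ => rfl⟩ :
          ↥t ≃ {x : {x // x ∈ s ∪ t} // (x : B) ∈ t}))))
    (Equiv.refl _)

theorem extendPermAux_apply_mem {B : Type*} [Fintype B] {s t : Set B} (e : ↥s ≃ ↥t)
    (x : B) (hx : x ∈ s) : extendPermAux e x = (e ⟨x, hx⟩ : B) := by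
  unfold extendPermAux
  rw [Equiv.Perm.subtypeCongr.left_apply (p := fun x => x ∈ s ∪ t) (a := x) (h := Or.inl hx)]
  rw [Equiv.extendSubtype_apply_of_mem _ (⟨x, Or.inl hx⟩ : {x // x ∈ s ∪ t}) hx]
  rfl

theorem extendPermAux_apply_notMem {B : Type*} [Fintype B] {s t : Set B} (e : ↥s ≃ ↥t)
    (x : B) (hx1 : x ∉ s) (hx2 : x ∉ t) : extendPermAux e x = x := by
  unfold extendPermAux
  rw [Equiv.Perm.subtypeCongr.right_apply (h := (by simp [hx1, hx2] : ¬ x ∈ s ∪ t))]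
  rfl

section Swap
variable {A B : Type*} [Fintype A] [Fintype B]

/-- Restriction of an embedding to a finset. -/
def restrEmb (s : Finset A) (σ : A ↪ B) : {a // a ∈ s} ↪ B :=
  (Function.Embedding.subtype _).trans σ

/-- The permutation of `B` carrying `ν a` to `f a` for `a ∈ s`, fixing everything
outside `Set.range ν ∪ f '' s`. -/
noncomputable def swapPerm (s : Finset A) (f : A → B) (hf : Set.InjOn f ↑s)
    (ν : {a // a ∈ s} ↪ B) : Equiv.Perm B :=
  extendPermAux ((Equiv.ofInjective ν ν.injective).symm.trans
    ((Equiv.subtypeEquivRight (fun a => Finset.mem_coe.symm)).trans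
      (Equiv.Set.imageOfInjOn f ↑s hf)))

theorem swapPerm_apply_nu (s : Finset A) (f : A → B) (hf : Set.InjOn f ↑s)
    (ν : {a // a ∈ s} ↪ B) (a : {a // a ∈ s}) :
    swapPerm s f hf ν (ν a) = f a := by
  unfold swapPerm
  rw [extendPermAux_apply_mem _ (ν a) (⟨a, rfl⟩ : ν a ∈ Set.range ν)]
  have : (⟨ν a, ⟨a, rfl⟩⟩ : ↥(Set.range ν)) = Equiv.ofInjective ν ν.injective a := rfl
  rw [Equiv.trans_apply, this, Equiv.symm_apply_apply]
  rfl

theorem swapPerm_apply_notMem (s : Finset A) (f : A → B) (hf : Set.InjOn f ↑s)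
    (ν : {a // a ∈ s} ↪ B) (x : B) (h1 : x ∉ Set.range ν) (h2 : x ∉ f '' ↑s) :
    swapPerm s f hf ν x = x :=
  extendPermAux_apply_notMem _ x h1 h2

end Swap

section Phi
variable {A B : Type*} [Fintype A] [Fintype B]

/-- The bijection `ℐ(A,B) ≃ X(s,f) × ℐ(s,B)` obtained by the swapping argument. -/
noncomputable def phiEquiv (s : Finset A) (f : A → B) (hf : Set.InjOn f ↑s) :
    (A ↪ B) ≃ {τ : A ↪ B // ∀ a ∈ s, τ a = f a} × ({a // a ∈ s} ↪ B) where
  toFun σ := (⟨σ.trans (swapPerm s f hf (restrEmb s σ)).toEmbedding, fun a ha =>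
      swapPerm_apply_nu s f hf (restrEmb s σ) ⟨a, ha⟩⟩, restrEmb s σ)
  invFun p := p.1.1.trans (swapPerm s f hf p.2).symm.toEmbedding
  left_inv σ := by
    ext a
    simp [restrEmb, Function.Embedding.trans_apply]
  right_inv p := by
    obtain ⟨⟨τ, hτ⟩, ν⟩ := p
    have hr : restrEmb s (τ.trans (swapPerm s f hf ν).symm.toEmbedding) = ν := by
      ext a
      show (swapPerm s f hf ν).symm (τ a) = ν a
      rw [hτ a a.2, Equiv.symm_apply_eq, swapPerm_apply_nu]
    refine Prod.ext (Subtype.ext ?_) hr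
    show (τ.trans (swapPerm s f hf ν).symm.toEmbedding).trans
        (swapPerm s f hf (restrEmb s (τ.trans (swapPerm s f hf ν).symm.toEmbedding))).toEmbedding = τ
    rw [hr]
    ext a
    simp

theorem phiEquiv_symm_fst (s : Finset A) (f : A → B) (hf : Set.InjOn f ↑s)
    (τ : {τ : A ↪ B // ∀ a ∈ s, τ a = f a}) (ν : {a // a ∈ s} ↪ B) (a : A) :
    τ.1 a = swapPerm s f hf ν ((phiEquiv s f hf).symm (τ, ν) a) := by
  show τ.1 a = swapPerm s f hf ν ((swapPerm s f hf ν).symm (τ.1 a))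
  rw [Equiv.apply_symm_apply]

theorem phiEquiv_symm_restr (s : Finset A) (f : A → B) (hf : Set.InjOn f ↑s)
    (τ : {τ : A ↪ B // ∀ a ∈ s, τ a = f a}) (ν : {a // a ∈ s} ↪ B) (a : {a // a ∈ s}) :
    (phiEquiv s f hf).symm (τ, ν) a = ν a := by
  show (swapPerm s f hf ν).symm (τ.1 a) = ν a
  rw [τ.2 a a.2, Equiv.symm_apply_eq, swapPerm_apply_nu]

end Phi

/-- **Lemma 12** (Lu–Székely).  Let `A`, `B` be finite sets with `|A| ≤ |B|` and let
`E i = {σ ∈ ℐ(A,B) : σ agrees with π i on S i}` (for `i ∈ [t]`) be canonical events for the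
uniform measure on the injections `ℐ(A,B)`, where each `π i` is injective on `S i`.  Then
the graph `D` whose edges are exactly the conflicting pairs (pairs of canonical events with
no common extension, i.e. with empty intersection) is a negative dependency graph: for
every `i` and every finite family `Z` of events that are not adjacent to (i.e. do not
conflict with) `X i`, one has `P(E i ∩ ⋂_{j ∈ Z} (E j)ᶜ) ≤ P(E i) · P(⋂_{j ∈ Z} (E j)ᶜ)`. -/
theorem canonical_dependency_graph_is_negative
    {A B : Type*} [Fintype A] [Fintype B]
    (hAB : Fintype.card A ≤ Fintype.card B)
    {t : ℕ} (S : Fin t → Finset A) (π : Fin t → A → B)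
    (hπ : ∀ i, Set.InjOn (π i) (S i))
    (E : Fin t → Set (A ↪ B))
    (hE : ∀ i, E i = {σ : A ↪ B | ∀ a ∈ S i, σ a = π i a})
    (D : SimpleGraph (Fin t))
    (hD : ∀ i j, D.Adj i j ↔ i ≠ j ∧ E i ∩ E j = ∅) :
    ∀ (i : Fin t) (Z : Finset (Fin t)), (∀ j ∈ Z, j ≠ i ∧ ¬ D.Adj i j) →
      uniformProb (E i ∩ ⋂ j ∈ Z, (E j)ᶜ) ≤
        uniformProb (E i) * uniformProb (⋂ j ∈ Z, (E j)ᶜ) := by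
  classical
  intro i Z hZ
  set F : Set (A ↪ B) := ⋂ j ∈ Z, (E j)ᶜ with hF
  set s : Finset A := S i with hs
  set f : A → B := π i with hfdef
  have hf : Set.InjOn f ↑s := hπ i
  set Φ := phiEquiv s f hf with hΦ
  -- the key transfer lemma: the swap preserves avoidance of non-conflicting events
  have key : ∀ (τ : {τ : A ↪ B // ∀ a ∈ s, τ a = f a}) (ν : {a // a ∈ s} ↪ B),
      τ.1 ∈ F → Φ.symm (τ, ν) ∈ F := by
    intro τ ν hτF
    simp only [hF, Set.mem_iInter, Set.mem_compl_iff] at hτF ⊢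
    intro j hj hσj
    refine hτF j hj ?_
    obtain ⟨hji, hnadj⟩ := hZ j hj
    have hne : E i ∩ E j ≠ ∅ := fun h0 => hnadj ((hD i j).mpr ⟨hji.symm, h0⟩)
    obtain ⟨ρ, hρi, hρj⟩ := Set.nonempty_iff_ne_empty.mpr hne
    rw [hE i] at hρi
    rw [hE j] at hρj hσj ⊢
    simp only [Set.mem_setOf_eq] at hρi hρj hσj ⊢
    intro a ha
    by_cases hai : a ∈ s
    · rw [τ.2 a hai]
      show π i a = π j a
      rw [← hρi a hai, hρj a ha]
    · have hσa : Φ.symm (τ, ν) a = π j a := hσj a ha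
      have h1 : π j a ∉ Set.range ν := by
        rintro ⟨a', ha'⟩
        have hv : Φ.symm (τ, ν) (a' : A) = ν a' := phiEquiv_symm_restr s f hf τ ν a'
        have : (a' : A) = a := (Φ.symm (τ, ν)).injective (by rw [hv, ha', hσa])
        exact hai (this ▸ a'.2)
      have h2 : π j a ∉ f '' ↑s := by
        rintro ⟨a', ha's, ha'⟩
        have : ρ a' = ρ a := by
          rw [hρi a' ha's, hρj a ha]
          exact ha'
        exact hai (ρ.injective this ▸ ha's)
      rw [phiEquiv_symm_fst s f hf τ ν a, hσa,
        swapPerm_apply_notMem s f hf ν _ h1 h2]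
  -- counting
  haveI : Nonempty (A ↪ B) := Function.Embedding.nonempty_of_card_le hAB
  have hNpos : 0 < Nat.card (A ↪ B) := Nat.card_pos
  set nI := Nat.card ({a // a ∈ s} ↪ B) with hnI
  have hcardN : Nat.card (A ↪ B) = Nat.card {τ : A ↪ B // ∀ a ∈ s, τ a = f a} * nI := by
    rw [Nat.card_congr Φ, Nat.card_prod]
  have hXcard : (E i).ncard = Nat.card {τ : A ↪ B // ∀ a ∈ s, τ a = f a} := by
    rw [← Nat.card_coe_set_eq, hE i]
    rfl
  have hcount : (E i ∩ F).ncard * nI ≤ F.ncard := by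
    rw [← Nat.card_coe_set_eq, ← Nat.card_coe_set_eq, ← Nat.card_prod]
    apply Nat.card_le_card_of_injective
      (f := fun p : ↥(E i ∩ F) × ({a // a ∈ s} ↪ B) =>
        (⟨Φ.symm (⟨p.1.1, (Set.ext_iff.mp (hE i) p.1.1).mp p.1.2.1⟩, p.2),
          key _ _ p.1.2.2⟩ : ↥F))
    intro p q hpq
    have h2 := Φ.symm.injective (Subtype.ext_iff.mp hpq)
    simp only [Prod.mk.injEq, Subtype.mk.injEq] at h2
    exact Prod.ext (Subtype.ext h2.1) h2.2
  have keyNat : (E i ∩ F).ncard * Nat.card (A ↪ B) ≤ (E i).ncard * F.ncard := by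
    rw [hcardN, ← hXcard]
    calc (E i ∩ F).ncard * ((E i).ncard * nI)
        = (E i).ncard * ((E i ∩ F).ncard * nI) := by ring
      _ ≤ (E i).ncard * F.ncard := Nat.mul_le_mul_left _ hcount
  unfold uniformProb
  have hN0 : (0:ℝ) < (Nat.card (A ↪ B) : ℝ) := by exact_mod_cast hNpos
  rw [div_mul_div_comm, div_le_div_iff₀ hN0 (mul_pos hN0 hN0)]
  have keyR : ((E i ∩ F).ncard : ℝ) * (Nat.card (A ↪ B) : ℝ)
      ≤ ((E i).ncard : ℝ) * (F.ncard : ℝ) := by exact_mod_cast keyNat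
  nlinarith [keyR, hN0, mul_le_mul_of_nonneg_right keyR hN0.le]
end

section
/- Let A and B be finite sets with |A| ≤ |B|, and consider the uniform probability measure on the set ℐ(A,B) of injections from A to B. Let 𝒳 be a finite set of canonical events for ℐ(A,B), and let D' be the intersection graph for 𝒳, i.e., the graph on vertex set 𝒳 with an edge between two events X(A'_1,B'_1,π_1) and X(A'_2,B'_2,π_2) exactly when (A'_1 ∩ A'_2) ∪ (B'_1 ∩ B'_2) ≠ ∅. Then any two canonical events that conflict are adjacent in D' (so D' is a supergraph of the canonical dependency graph), and consequently D' is a negative dependency graph for 𝒳. -/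
/-!
Two canonical events that are not adjacent have disjoint domains and disjoint images, so the
union of their partial injections is again a partial injection, which extends to an injection
`A ↪ B` because `|A| ≤ |B|`: conflicting events are adjacent.

For negative dependency, let `F` be the event that no `E j` with `j ∈ Z` occurs and let
`T = π i '' S i`. Given any injection `ρ` on `S i`, there is a permutation `τ` of `B` with
`τ ∘ π i = ρ` on `S i` which sends every point outside `T` either to itself or into `T`.
Since each `E j` lives on a domain disjoint from `S i` and an image disjoint from `T`,
post-composition with `τ` maps `E i ∩ F` injectively into `{σ | σ = ρ on S i} ∩ F`.
So `E i ∩ F` is the smallest of the sets `{σ | σ = ρ on S i} ∩ F`, which partition `F` into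
`|ℐ(A,B)| / |E i|` pieces; hence `|E i ∩ F| ≤ |F| |E i| / |ℐ(A,B)|`.
-/

open Finset

def canonicalEvent {α β : Type*} (s : Finset α) (f : α → β) : Set (α ↪ β) :=
  {σ | ∀ a ∈ s, σ a = f a}

theorem uniformProb_inter_le_mul {α β : Type*} {X Y : Set (α ↪ β)}
    (h : (X ∩ Y).ncard * Nat.card (α ↪ β) ≤ X.ncard * Y.ncard) :
    uniformProb (X ∩ Y) ≤ uniformProb X * uniformProb Y := by
  unfold uniformProb
  rw [div_mul_div_comm]
  rcases Nat.eq_zero_or_pos (Nat.card (α ↪ β)) with hN | hN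
  · simp [hN]
  have hN' : (0 : ℝ) < Nat.card (α ↪ β) := Nat.cast_pos.2 hN
  rw [div_le_div_iff₀ hN' (mul_pos hN' hN'), ← mul_assoc]
  exact mul_le_mul_of_nonneg_right (by exact_mod_cast h) hN'.le

section

variable {α β : Type*}

theorem mem_canonicalEvent_comm {s : Finset α} {σ ρ : α ↪ β} :
    σ ∈ canonicalEvent s ρ ↔ ρ ∈ canonicalEvent s σ :=
  forall₂_congr fun _ _ => eq_comm

variable [DecidableEq β]

theorem exists_embedding_eqOn_of_injOn [Fintype α] [Fintype β]
    (hcard : Fintype.card α ≤ Fintype.card β) {s : Finset α} {f : α → β}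
    (hf : Set.InjOn f s) : ∃ σ : α ↪ β, ∀ a ∈ s, σ a = f a := by
  obtain ⟨t, hst, -, ht⟩ := exists_subsuperset_card_eq (subset_univ (s.image f))
    (card_image_le.trans (card_le_univ s)) hcard
  obtain ⟨e, he⟩ := exists_equiv_extend_of_card_eq ht.symm hst hf
  exact ⟨e.toEmbedding.trans (Function.Embedding.subtype _), he⟩

theorem canonicalEvent_inter_nonempty [Fintype α] [Fintype β] [DecidableEq α]
    (hcard : Fintype.card α ≤ Fintype.card β) {s t : Finset α} {f g : α → β}
    (hf : Set.InjOn f s) (hg : Set.InjOn g t) (hst : Disjoint s t)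
    (himg : Disjoint (s.image f) (t.image g)) :
    (canonicalEvent s f ∩ canonicalEvent t g).Nonempty := by
  have hinj : Set.InjOn (s.piecewise f g) ↑(s ∪ t) := by
    rw [coe_union, Set.injOn_union (disjoint_coe.2 hst)]
    refine ⟨hf.congr fun a ha => (piecewise_eq_of_mem _ _ _ ha).symm,
      hg.congr fun a ha => (piecewise_eq_of_notMem _ _ _ (disjoint_right.1 hst ha)).symm,
      fun a ha b hb => ?_⟩
    rw [piecewise_eq_of_mem _ _ _ ha, piecewise_eq_of_notMem _ _ _ (disjoint_right.1 hst hb)]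
    exact disjoint_left.1 himg (mem_image_of_mem f ha) ∘ (· ▸ mem_image_of_mem g hb)
  obtain ⟨σ, hσ⟩ := exists_embedding_eqOn_of_injOn hcard hinj
  refine ⟨σ, fun a ha => ?_, fun a ha => ?_⟩
  · rw [hσ a (mem_union_left _ ha), piecewise_eq_of_mem _ _ _ ha]
  · rw [hσ a (mem_union_right _ ha), piecewise_eq_of_notMem _ _ _ (disjoint_right.1 hst ha)]

theorem Equiv.Perm.exists_eqOn_of_injOn {s : Finset α} {f g : α → β}
    (hf : Set.InjOn f s) (hg : Set.InjOn g s) :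
    ∃ τ : Equiv.Perm β, (∀ a ∈ s, τ (f a) = g a) ∧
      ∀ x ∉ s.image f, τ x = x ∨ τ x ∈ s.image f := by
  set U := s.image f ∪ s.image g
  let f' : s → U := fun a => ⟨f a, mem_union_left _ (mem_image_of_mem f a.2)⟩
  let g' : s → U := fun a => ⟨g a, mem_union_right _ (mem_image_of_mem g a.2)⟩
  obtain ⟨τ, hτ⟩ := Equiv.Perm.exists_extending_pair f' g'
    (fun a b h => Subtype.ext (hf a.2 b.2 (congrArg Subtype.val h)))
    (fun a b h => Subtype.ext (hg a.2 b.2 (congrArg Subtype.val h)))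
  refine ⟨Equiv.Perm.ofSubtype τ, fun a ha => ?_, fun x hx => ?_⟩
  · rw [Equiv.Perm.ofSubtype_apply_of_mem τ (f' ⟨a, ha⟩).2]
    exact congrArg Subtype.val (hτ ⟨a, ha⟩)
  by_cases hxU : x ∈ U
  · right
    rw [Equiv.Perm.ofSubtype_apply_of_mem τ hxU]
    -- `τ` maps `s.image f` onto `s.image g`, so the rest of `U` is sent into `s.image f`
    refine (mem_union.1 (τ ⟨x, hxU⟩).2).resolve_right fun hxg => hx ?_
    obtain ⟨a, ha, hax⟩ := mem_image.1 hxg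
    have : τ (f' ⟨a, ha⟩) = τ ⟨x, hxU⟩ :=
      Subtype.ext ((congrArg Subtype.val (hτ ⟨a, ha⟩)).trans hax)
    exact mem_image.2 ⟨a, ha, congrArg Subtype.val (τ.injective this)⟩
  · exact Or.inl (Equiv.Perm.ofSubtype_apply_of_not_mem τ hxU)

theorem trans_notMem_canonicalEvent {s t : Finset α} {f g : α → β} {τ : Equiv.Perm β}
    (hτ : ∀ x ∉ s.image f, τ x = x ∨ τ x ∈ s.image f) (hst : Disjoint s t)
    (himg : Disjoint (s.image f) (t.image g)) {σ : α ↪ β} (hσs : σ ∈ canonicalEvent s f)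
    (hσt : σ ∉ canonicalEvent t g) : σ.trans τ.toEmbedding ∉ canonicalEvent t g := by
  simp only [canonicalEvent, Set.mem_ofPred_eq, not_forall] at hσt ⊢
  obtain ⟨a, ha, hne⟩ := hσt
  have hσa : σ a ∉ s.image f := by
    simp only [mem_image, not_exists, not_and]
    intro b hb hba
    rw [← hσs b hb] at hba
    exact disjoint_left.1 hst (σ.injective hba ▸ hb) ha
  refine ⟨a, ha, ?_⟩
  rcases hτ _ hσa with hfix | hmem
  · simpa [hfix] using hne
  · simp only [Function.Embedding.trans_apply, Equiv.coe_toEmbedding]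
    exact fun h => disjoint_left.1 himg hmem (h ▸ mem_image_of_mem g ha)

theorem ncard_canonicalEvent_inter_le [Finite β] {s : Finset α} {f h : α → β}
    (hf : Set.InjOn f s) (hh : Set.InjOn h s) {F : Set (α ↪ β)}
    (hF : ∀ τ : Equiv.Perm β, (∀ x ∉ s.image f, τ x = x ∨ τ x ∈ s.image f) →
      ∀ σ ∈ canonicalEvent s f ∩ F, σ.trans τ.toEmbedding ∈ F) :
    (canonicalEvent s f ∩ F).ncard ≤ (canonicalEvent s h ∩ F).ncard := by
  obtain ⟨τ, hτh, hτ⟩ := Equiv.Perm.exists_eqOn_of_injOn hf hh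
  refine Set.ncard_le_ncard_of_injOn (fun σ => σ.trans τ.toEmbedding)
    (fun σ hσ => ⟨fun a ha => ?_, hF τ hτ σ hσ⟩) (fun σ _ σ' _ hσ => ?_) (Set.toFinite _)
  · simp [hσ.1 a ha, hτh a ha]
  · ext a
    simpa using DFunLike.congr_fun hσ a

theorem ncard_canonicalEvent_eq [Finite β] {s : Finset α} {f h : α → β}
    (hf : Set.InjOn f s) (hh : Set.InjOn h s) :
    (canonicalEvent s f).ncard = (canonicalEvent s h).ncard := by
  simpa using (ncard_canonicalEvent_inter_le hf hh (F := Set.univ) fun _ _ _ _ => trivial).antisymm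
    (ncard_canonicalEvent_inter_le hh hf (F := Set.univ) fun _ _ _ _ => trivial)

theorem ncard_canonicalEvent_inter_mul_card_le [Fintype α] [Fintype β] {s : Finset α}
    {f : α → β} (hf : Set.InjOn f s) {F : Set (α ↪ β)}
    (hF : ∀ ρ : α ↪ β, (canonicalEvent s f ∩ F).ncard ≤ (canonicalEvent s ρ ∩ F).ncard) :
    (canonicalEvent s f ∩ F).ncard * Nat.card (α ↪ β) ≤
      (canonicalEvent s f).ncard * F.ncard := by
  classical
  let agree : (α ↪ β) → (α ↪ β) → Prop := fun ρ σ => σ ∈ canonicalEvent s ρ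
  calc (canonicalEvent s f ∩ F).ncard * Nat.card (α ↪ β)
      = ∑ _ρ : α ↪ β, (canonicalEvent s f ∩ F).ncard := by
        rw [sum_const, card_univ, smul_eq_mul, Nat.card_eq_fintype_card, mul_comm]
    _ ≤ ∑ ρ : α ↪ β, (canonicalEvent s ρ ∩ F).ncard := sum_le_sum fun ρ _ => hF ρ
    _ = ∑ ρ : α ↪ β, #(F.toFinset.bipartiteAbove agree ρ) := sum_congr rfl fun ρ _ => by
        rw [Set.ncard_eq_toFinset_card']
        congr 1
        ext σ
        simp [agree, bipartiteAbove, and_comm]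
    _ = ∑ σ ∈ F.toFinset, #(univ.bipartiteBelow agree σ) :=
        sum_card_bipartiteAbove_eq_sum_card_bipartiteBelow agree
    _ = ∑ σ ∈ F.toFinset, (canonicalEvent s σ).ncard := sum_congr rfl fun σ _ => by
        rw [Set.ncard_eq_toFinset_card']
        congr 1
        ext ρ
        simp [agree, bipartiteBelow, mem_canonicalEvent_comm]
    _ = (canonicalEvent s f).ncard * F.ncard := by
        rw [sum_congr rfl fun σ _ => ncard_canonicalEvent_eq σ.injective.injOn hf, sum_const,
          smul_eq_mul, ← Set.ncard_eq_toFinset_card', mul_comm]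

end

/-- Let `A`, `B` be finite sets with `|A| ≤ |B|` and let
`E i = {σ ∈ ℐ(A,B) : σ agrees with π i on S i}` (for `i ∈ [t]`) be canonical events for the
uniform measure on the injections `ℐ(A,B)`, where each `π i` is injective on `S i`.  Let
`D'` be the intersection graph: two events are adjacent iff they are distinct and their
domains `S i`, `S j` intersect or their images `π i '' S i`, `π j '' S j` intersect.  Then
every two distinct conflicting canonical events are adjacent in `D'` (so `D'` is a
supergraph of the canonical dependency graph), and `D'` is a negative dependency graph. -/
theorem intersection_graph_is_negative_dependency_graph
    {A B : Type*} [Fintype A] [Fintype B] [DecidableEq A] [DecidableEq B]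
    (hAB : Fintype.card A ≤ Fintype.card B)
    {t : ℕ} (S : Fin t → Finset A) (π : Fin t → A → B)
    (hπ : ∀ i, Set.InjOn (π i) (S i))
    (E : Fin t → Set (A ↪ B))
    (hE : ∀ i, E i = {σ : A ↪ B | ∀ a ∈ S i, σ a = π i a})
    (D' : SimpleGraph (Fin t))
    (hD' : ∀ i j, D'.Adj i j ↔ i ≠ j ∧
      ((S i ∩ S j).Nonempty ∨ ((S i).image (π i) ∩ (S j).image (π j)).Nonempty)) :
    (∀ i j, i ≠ j → E i ∩ E j = ∅ → D'.Adj i j) ∧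
    (∀ (i : Fin t) (Z : Finset (Fin t)), (∀ j ∈ Z, j ≠ i ∧ ¬ D'.Adj i j) →
      uniformProb (E i ∩ ⋂ j ∈ Z, (E j)ᶜ) ≤
        uniformProb (E i) * uniformProb (⋂ j ∈ Z, (E j)ᶜ)) := by
  obtain rfl : E = fun i => canonicalEvent (S i) (π i) := funext hE
  have hdisj : ∀ i j, i ≠ j → ¬ D'.Adj i j →
      Disjoint (S i) (S j) ∧ Disjoint ((S i).image (π i)) ((S j).image (π j)) := by
    intro i j hij hadj
    simpa [hD', hij, ← not_disjoint_iff_nonempty_inter] using hadj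
  refine ⟨fun i j hij hcap => ?_, fun i Z hZ => ?_⟩
  · by_contra hadj
    obtain ⟨hdom, himg⟩ := hdisj i j hij hadj
    simpa [hcap] using canonicalEvent_inter_nonempty hAB (hπ i) (hπ j) hdom himg
  set F := ⋂ j ∈ Z, (canonicalEvent (S j) (π j))ᶜ
  have hF : ∀ τ : Equiv.Perm B,
      (∀ x ∉ (S i).image (π i), τ x = x ∨ τ x ∈ (S i).image (π i)) →
      ∀ σ ∈ canonicalEvent (S i) (π i) ∩ F, σ.trans τ.toEmbedding ∈ F := by
    rintro τ hτ σ ⟨hσi, hσZ⟩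
    refine Set.mem_iInter₂.2 fun j hj => ?_
    obtain ⟨hdom, himg⟩ := hdisj i j (hZ j hj).1.symm (hZ j hj).2
    exact trans_notMem_canonicalEvent hτ hdom himg hσi (Set.mem_iInter₂.1 hσZ j hj)
  exact uniformProb_inter_le_mul <| ncard_canonicalEvent_inter_mul_card_le (hπ i) fun ρ =>
    ncard_canonicalEvent_inter_le (hπ i) ρ.injective.injOn hF
end

section
/- Let G be a graph with vertex set [n] and maximum degree Δ > 0, let χ be a k-bounded edge colouring of the complete graph K_n on vertex set [n], and consider the uniform probability measure on the set ℐ of injections from [n] to [n]. Let 𝒳 be the set of all bad events X(e⃗,f⃗;a⃗,b⃗): canonical events consisting of all σ ∈ ℐ mapping the ordered pair e⃗ onto a⃗ and the ordered pair f⃗ onto b⃗, where e⃗, f⃗ are lexicographically ordered ordered pairs coming from distinct edges e, f of G, a⃗ = (a_1,a_2), b⃗ = (b_1,b_2) are ordered pairs of distinct vertices of K_n with χ({a_1,a_2}) = χ({b_1,b_2}), and some injection consistent with these requirements exists. Call an event of intersecting type if e ∩ f ≠ ∅ and of disjoint type otherwise, and let D' be the intersection graph on 𝒳 (two events adjacent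 iff their G-edge vertex sets e∪f intersect or their K_n-edge vertex sets a∪b intersect). Then for every bad event X = X(e⃗,f⃗;a⃗,b⃗): (1) for each vertex x ∈ e∪f, the set consisting of X together with all bad events whose G-edge vertex set contains x is a clique in D', containing at most (3/2)·Δ²·n²·k events of intersecting type and at most Δ²·n³·k events of disjoint type (including X itself); and (2) for each vertex u ∈ a∪b, the set of all bad events whose K_n-edge vertex set contains u is a clique in D', containing at most Δ²·n²·k events of intersecting type and at most Δ²·n³·k events of disjoint type. -/
/-- A *bad event* for the rainbow-embedding argument: it is determined by a
lexicographically ordered pair of (oriented) distinct edges `e⃗ = (e1,e2)`, `f⃗ = (f1,f2)`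
of `G` and ordered pairs `a⃗ = (a1,a2)`, `b⃗ = (b1,b2)` of distinct vertices of `K_n` whose
corresponding edges receive the same colour under `χ`, such that some injection
`σ : [n] ↪ [n]` maps `e⃗` onto `a⃗` and `f⃗` onto `b⃗`.  The associated canonical event is
the set of all such injections. -/
structure BadEvent {C : Type*} (n : ℕ) (G : SimpleGraph (Fin n))
    (χ : Sym2 (Fin n) → C) where
  e1 : Fin n
  e2 : Fin n
  f1 : Fin n
  f2 : Fin n
  a1 : Fin n
  a2 : Fin n
  b1 : Fin n
  b2 : Fin n
  he : G.Adj e1 e2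
  hf : G.Adj f1 f2
  he_lt : e1 < e2
  hf_lt : f1 < f2
  hlex : e1 < f1 ∨ (e1 = f1 ∧ e2 < f2)
  ha : a1 ≠ a2
  hb : b1 ≠ b2
  hcol : χ s(a1, a2) = χ s(b1, b2)
  hex : ∃ σ : Fin n ↪ Fin n, σ e1 = a1 ∧ σ e2 = a2 ∧ σ f1 = b1 ∧ σ f2 = b2

variable {C : Type*} {n : ℕ} {G : SimpleGraph (Fin n)} {χ : Sym2 (Fin n) → C}

/-- The vertex set `e ∪ f` in `G` of the two `G`-edges of a bad event. -/
def BadEvent.Gverts (X : BadEvent n G χ) : Finset (Fin n) := {X.e1, X.e2, X.f1, X.f2}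

/-- The vertex set `a ∪ b` in `K_n` of the two `K_n`-edges of a bad event. -/
def BadEvent.Kverts (X : BadEvent n G χ) : Finset (Fin n) := {X.a1, X.a2, X.b1, X.b2}

/-- A bad event is of *intersecting type* if its two `G`-edges share a vertex; otherwise
it is of *disjoint type*. -/
def BadEvent.IsIntersectingType (X : BadEvent n G χ) : Prop :=
  X.e1 = X.f1 ∨ X.e1 = X.f2 ∨ X.e2 = X.f1 ∨ X.e2 = X.f2

/-- The *intersection graph* `D'` on the bad events: two distinct bad events are adjacent
iff they are `G`-intersecting (their `G`-edge vertex sets intersect) or `K_n`-intersecting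
(their `K_n`-edge vertex sets intersect). -/
def intersectionGraph (n : ℕ) (G : SimpleGraph (Fin n)) (χ : Sym2 (Fin n) → C) :
    SimpleGraph (BadEvent n G χ) where
  Adj X Y := X ≠ Y ∧
    ((X.Gverts ∩ Y.Gverts).Nonempty ∨ (X.Kverts ∩ Y.Kverts).Nonempty)
  symm := ⟨by
    rintro X Y ⟨hne, h⟩
    refine ⟨hne.symm, ?_⟩
    rcases h with h | h
    · exact Or.inl (by rwa [Finset.inter_comm])
    · exact Or.inr (by rwa [Finset.inter_comm])⟩
  loopless := ⟨fun X h => h.1 rfl⟩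

/-!
Each bad event is recorded by its two `G`-edges, a lexicographically ordered pair of increasing
edges, and its two `K_n`-edges, which have equal colours. So every family of events is bounded by
(number of admissible `G`-edge pairs) × (number of admissible `K_n`-edge pairs). On the `G` side,
ordered pairs of edges are counted through degrees and then halved, since swapping a pair reverses
the lexicographic order. On the `K_n` side, once the first edge is fixed the second lies in a
colour class of size at most `k`. In an event of intersecting type the two `K_n`-edges share the
image of the common vertex, so the unordered `K_n`-edges already determine the event; in general
their orientations cost a further factor `4`.
-/

open Set

namespace Set

variable {α β : Type*}

theorem ncard_le_ncard_mul_of_fibres [Finite α] [Finite β] {f : α → β} {s : Set α}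
    {t : Set β} (hst : MapsTo f s t) {m : ℕ}
    (hfib : ∀ b ∈ t, (s ∩ f ⁻¹' {b}).ncard ≤ m) : s.ncard ≤ t.ncard * m := by
  classical
  rw [ncard_eq_toFinset_card s, ncard_eq_toFinset_card t, mul_comm]
  refine Finset.card_le_mul_card_image_of_maps_to
    (fun a ha => by simpa using hst (by simpa using ha)) m fun b hb => ?_
  convert hfib b (by simpa using hb) using 1
  rw [ncard_eq_toFinset_card _]
  congr 1
  ext
  simp

theorem ncard_le_ncard_mul_of_subset_sigma [Finite α] [Finite β] {s : Set (α × β)} {A : Set α}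
    {F : α → Set β} (hs : ∀ w ∈ s, w.1 ∈ A ∧ w.2 ∈ F w.1) {m : ℕ}
    (hF : ∀ a ∈ A, (F a).ncard ≤ m) : s.ncard ≤ A.ncard * m := by
  refine ncard_le_ncard_mul_of_fibres (fun w hw => (hs w hw).1) fun a ha => ?_
  refine (ncard_le_ncard_of_injOn Prod.snd (fun w hw => ?_) ?_).trans (hF a ha)
  · obtain ⟨hws, rfl : w.1 = a⟩ := hw
    exact (hs w hws).2
  · rintro w₁ ⟨-, h₁⟩ w₂ ⟨-, h₂⟩ h
    exact Prod.ext (h₁.trans h₂.symm) h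

theorem ncard_le_ncard_mul_ncard_of_injOn {γ : Type*} [Finite β] [Finite γ] {s : Set α}
    {A : Set β} {B : Set γ} {f : α → β} {g : α → γ} (hf : MapsTo f s A)
    (hg : MapsTo g s B) (hinj : InjOn (fun a => (f a, g a)) s) : s.ncard ≤ A.ncard * B.ncard := by
  rw [← ncard_prod]
  exact ncard_le_ncard_of_injOn _ (fun a ha => ⟨hf ha, hg ha⟩) hinj

theorem ncard_preimage_swap (s : Set (α × β)) : (Prod.swap ⁻¹' s).ncard = s.ncard := by
  rw [← image_swap_eq_preimage_swap, ncard_image_of_injective _ Prod.swap_injective]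

theorem two_mul_ncard_inter_le {U : Set (β × β)} (hU : U.Finite)
    (hswap : ∀ p ∈ U, p.swap ∈ U) (r : β → β → Prop) (hr : ∀ a b, r a b → ¬r b a) :
    2 * (U ∩ {p | r p.1 p.2}).ncard ≤ U.ncard := by
  set A := U ∩ {p | r p.1 p.2}
  have hdisj : Disjoint A (Prod.swap '' A) := by
    rw [Set.disjoint_left]
    rintro p ⟨-, hp⟩ ⟨q, ⟨-, hq⟩, rfl⟩
    exact hr _ _ hq hp
  have hsub : A ∪ Prod.swap '' A ⊆ U :=
    union_subset inter_subset_left (by rintro _ ⟨q, ⟨hq, -⟩, rfl⟩; exact hswap q hq)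
  calc 2 * A.ncard = (A ∪ Prod.swap '' A).ncard := by
        have hA : A.Finite := hU.subset inter_subset_left
        rw [ncard_union_eq hdisj hA (hA.image _), ncard_image_of_injective _ Prod.swap_injective,
          two_mul]
    _ ≤ U.ncard := ncard_le_ncard hsub hU

end Set

section EdgePairs

variable {V : Type*}

def meetingEdgePairs : Set ((V × V) × (V × V)) :=
  {D | ∃ v, v ∈ s(D.1.1, D.1.2) ∧ v ∈ s(D.2.1, D.2.2)}

def edgePairsThrough (x : V) : Set ((V × V) × (V × V)) :=
  {D | x ∈ s(D.1.1, D.1.2) ∨ x ∈ s(D.2.1, D.2.2)}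

end EdgePairs

namespace SimpleGraph

variable {V : Type*} [LinearOrder V] (G : SimpleGraph V)

def increasingEdges : Set (V × V) := {p | G.Adj p.1 p.2 ∧ p.1 < p.2}

def increasingEdgesAt (x : V) : Set (V × V) := G.increasingEdges ∩ {P | x ∈ s(P.1, P.2)}

def lexEdgePairs : Set ((V × V) × (V × V)) :=
  G.increasingEdges ×ˢ G.increasingEdges ∩ {D | toLex D.1 < toLex D.2}

variable [Fintype V]

theorem two_mul_ncard_lexEdgePairs_inter_le {Φ : Set ((V × V) × (V × V))}
    (hΦ : ∀ D ∈ Φ, D.swap ∈ Φ) :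
    2 * (G.lexEdgePairs ∩ Φ).ncard ≤
      (G.increasingEdges ×ˢ G.increasingEdges ∩ Φ).ncard := by
  rw [lexEdgePairs, inter_right_comm]
  exact two_mul_ncard_inter_le (U := G.increasingEdges ×ˢ G.increasingEdges ∩ Φ) (toFinite _)
    (fun D hD => ⟨⟨hD.1.2, hD.1.1⟩, hΦ D hD.2⟩)
    (fun P Q => toLex P < toLex Q) fun _ _ h => h.not_gt

variable [DecidableRel G.Adj]

omit [LinearOrder V] in
theorem ncard_neighborSet_le_maxDegree (v : V) : (G.neighborSet v).ncard ≤ G.maxDegree := by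
  rw [← coe_neighborFinset, ncard_coe_finset, card_neighborFinset_eq_degree]
  exact G.degree_le_maxDegree v

theorem two_mul_ncard_increasingEdges_le :
    2 * G.increasingEdges.ncard ≤ Fintype.card V * G.maxDegree := by
  have hadj : {p : V × V | G.Adj p.1 p.2}.ncard ≤ Fintype.card V * G.maxDegree := by
    rw [← Nat.card_eq_fintype_card, ← ncard_univ]
    exact ncard_le_ncard_mul_of_subset_sigma (F := G.neighborSet)
      (fun p hp => ⟨mem_univ _, hp⟩) fun v _ => G.ncard_neighborSet_le_maxDegree v
  exact (two_mul_ncard_inter_le (U := {p : V × V | G.Adj p.1 p.2}) (toFinite _)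
    (fun _ hp => G.adj_symm hp) (· < ·) fun _ _ h => h.not_gt).trans hadj

theorem ncard_increasingEdgesAt_le (x : V) : (G.increasingEdgesAt x).ncard ≤ G.maxDegree := by
  have hsub : G.increasingEdgesAt x ⊆ (fun y => (min x y, max x y)) '' G.neighborSet x := by
    rintro ⟨p, q⟩ ⟨⟨hpq, hlt⟩, hx⟩
    rcases Sym2.mem_iff.1 hx with rfl | rfl
    · exact ⟨q, hpq, by simp [hlt.le]⟩
    · exact ⟨p, hpq.symm, by simp [hlt.le]⟩
  exact (ncard_le_ncard hsub).trans <| (ncard_image_le (toFinite _)).trans <|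
    G.ncard_neighborSet_le_maxDegree x

theorem eight_mul_ncard_lexEdgePairs_le :
    8 * G.lexEdgePairs.ncard ≤ (Fintype.card V * G.maxDegree) ^ 2 := by
  have h := G.two_mul_ncard_lexEdgePairs_inter_le (Φ := univ) fun _ _ => mem_univ _
  rw [inter_univ, inter_univ, ncard_prod] at h
  have hT := G.two_mul_ncard_increasingEdges_le
  nlinarith

theorem two_mul_ncard_lexEdgePairs_inter_edgePairsThrough_le (x : V) :
    2 * (G.lexEdgePairs ∩ edgePairsThrough x).ncard ≤ Fintype.card V * G.maxDegree ^ 2 := by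
  refine (G.two_mul_ncard_lexEdgePairs_inter_le fun D hD => hD.symm).trans ?_
  have hsub : G.increasingEdges ×ˢ G.increasingEdges ∩ edgePairsThrough x ⊆
      G.increasingEdgesAt x ×ˢ G.increasingEdges ∪
        G.increasingEdges ×ˢ G.increasingEdgesAt x := by
    rintro ⟨P, Q⟩ ⟨⟨hP, hQ⟩, hx | hx⟩
    · exact Or.inl ⟨⟨hP, hx⟩, hQ⟩
    · exact Or.inr ⟨hP, hQ, hx⟩
  have hTx := G.ncard_increasingEdgesAt_le x
  have hT := G.two_mul_ncard_increasingEdges_le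
  calc _ ≤ _ := ncard_le_ncard hsub
    _ ≤ _ := ncard_union_le _ _
    _ = (G.increasingEdgesAt x).ncard * (2 * G.increasingEdges.ncard) := by
      rw [ncard_prod, ncard_prod]; ring
    _ ≤ G.maxDegree * (Fintype.card V * G.maxDegree) := Nat.mul_le_mul hTx hT
    _ = Fintype.card V * G.maxDegree ^ 2 := by ring

theorem two_mul_ncard_lexEdgePairs_inter_meetingEdgePairs_le :
    2 * (G.lexEdgePairs ∩ meetingEdgePairs).ncard ≤ Fintype.card V * G.maxDegree ^ 2 := by
  refine (G.two_mul_ncard_lexEdgePairs_inter_le (Φ := meetingEdgePairs)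
    fun D ⟨v, hv₁, hv₂⟩ => ⟨v, hv₂, hv₁⟩).trans ?_
  have hmeet : (G.increasingEdges ×ˢ G.increasingEdges ∩ meetingEdgePairs).ncard ≤
      G.increasingEdges.ncard * (2 * G.maxDegree) := by
    refine ncard_le_ncard_mul_of_subset_sigma (A := G.increasingEdges)
      (F := fun P => G.increasingEdgesAt P.1 ∪ G.increasingEdgesAt P.2) ?_ fun P _ => ?_
    · rintro ⟨P, Q⟩ ⟨⟨hP, hQ⟩, v, hvP, hvQ⟩
      refine ⟨hP, ?_⟩
      rcases Sym2.mem_iff.1 hvP with rfl | rfl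
      exacts [Or.inl ⟨hQ, hvQ⟩, Or.inr ⟨hQ, hvQ⟩]
    · exact (ncard_union_le _ _).trans (by
        linarith [G.ncard_increasingEdgesAt_le P.1, G.ncard_increasingEdgesAt_le P.2])
  have hT := G.two_mul_ncard_increasingEdges_le
  calc _ ≤ G.increasingEdges.ncard * (2 * G.maxDegree) := hmeet
    _ = 2 * G.increasingEdges.ncard * G.maxDegree := by ring
    _ ≤ Fintype.card V * G.maxDegree * G.maxDegree := Nat.mul_le_mul_right _ hT
    _ = Fintype.card V * G.maxDegree ^ 2 := by ring

theorem ncard_increasingEdges_inter_meeting_ne_le {x : V} {P : V × V}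
    (hP : P ∈ G.increasingEdgesAt x) :
    (G.increasingEdges ∩ {Q | ∃ v ≠ x, v ∈ s(P.1, P.2) ∧ v ∈ s(Q.1, Q.2)}).ncard ≤
      G.maxDegree := by
  obtain ⟨y, hy⟩ := Sym2.mem_iff_exists.1 hP.2
  refine (ncard_le_ncard (t := G.increasingEdgesAt y) ?_).trans (G.ncard_increasingEdgesAt_le y)
  rintro Q ⟨hQ, v, hvx, hvP, hvQ⟩
  rw [hy, Sym2.mem_iff] at hvP
  exact ⟨hQ, hvP.resolve_left hvx ▸ hvQ⟩

theorem two_mul_ncard_lexEdgePairs_inter_meetingEdgePairs_inter_edgePairsThrough_le (x : V) :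
    2 * (G.lexEdgePairs ∩ meetingEdgePairs ∩ edgePairsThrough x).ncard ≤
      3 * G.maxDegree ^ 2 := by
  rw [inter_assoc]
  refine (G.two_mul_ncard_lexEdgePairs_inter_le (Φ := meetingEdgePairs ∩ edgePairsThrough x)
    fun D ⟨⟨v, hv₁, hv₂⟩, hx⟩ => ⟨⟨v, hv₂, hv₁⟩, hx.symm⟩).trans ?_
  -- An ordered pair of edges meets either at `x`, or at the far end `v` of its edge through `x`;
  -- each of the three resulting kinds has at most `Δ²` members.
  set W := {D : (V × V) × (V × V) | D.1 ∈ G.increasingEdgesAt x ∧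
    D.2 ∈ G.increasingEdges ∩ {Q | ∃ v ≠ x, v ∈ s(D.1.1, D.1.2) ∧ v ∈ s(Q.1, Q.2)}}
  have hW : W.ncard ≤ G.maxDegree ^ 2 := by
    rw [sq]
    exact (ncard_le_ncard_mul_of_subset_sigma (fun D hD => hD)
      fun P hP => G.ncard_increasingEdges_inter_meeting_ne_le hP).trans
      (Nat.mul_le_mul_right _ (G.ncard_increasingEdgesAt_le x))
  have hsub : G.increasingEdges ×ˢ G.increasingEdges ∩
      (meetingEdgePairs ∩ edgePairsThrough x) ⊆
      G.increasingEdgesAt x ×ˢ G.increasingEdgesAt x ∪ W ∪ Prod.swap ⁻¹' W := by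
    rintro ⟨P, Q⟩ ⟨⟨hP, hQ⟩, ⟨v, hvP, hvQ⟩, hx⟩
    by_cases hvx : v = x
    · subst hvx
      exact Or.inl (Or.inl ⟨⟨hP, hvP⟩, hQ, hvQ⟩)
    · rcases hx with hx | hx
      · exact Or.inl (Or.inr ⟨⟨hP, hx⟩, hQ, v, hvx, hvP, hvQ⟩)
      · exact Or.inr ⟨⟨hQ, hx⟩, hP, v, hvx, hvQ, hvP⟩
  have hTx := G.ncard_increasingEdgesAt_le x
  calc _ ≤ _ := ncard_le_ncard hsub
    _ ≤ _ := ncard_union_le _ _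
    _ ≤ _ := Nat.add_le_add_right (ncard_union_le _ _) _
    _ ≤ 3 * G.maxDegree ^ 2 := by
      rw [ncard_prod, ncard_preimage_swap]
      nlinarith [Nat.mul_le_mul hTx hTx]

end SimpleGraph

section Colouring

variable {V : Type*} [Fintype V]

theorem ncard_sym2Mk_fibre_le (z : Sym2 V) : {A : V × V | s(A.1, A.2) = z}.ncard ≤ 2 := by
  induction z using Sym2.ind with | _ a b => ?_
  have hsub : {A : V × V | s(A.1, A.2) = s(a, b)} ⊆ {(a, b), (b, a)} := by
    rintro ⟨p, q⟩ h
    rcases Sym2.eq_iff.1 h with ⟨rfl, rfl⟩ | ⟨rfl, rfl⟩ <;> simp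
  exact (ncard_le_ncard hsub).trans ((ncard_insert_le _ _).trans (by simp))

theorem ncard_setOf_mem_le (u : V) : {P : Sym2 V | u ∈ P}.ncard ≤ Fintype.card V := by
  rw [← Nat.card_eq_fintype_card, ← ncard_univ]
  refine (ncard_le_ncard (t := (fun v => s(u, v)) '' univ) fun P hP => ?_).trans
    (ncard_image_le (toFinite _))
  obtain ⟨v, rfl⟩ := Sym2.mem_iff_exists.1 hP
  exact ⟨v, mem_univ _, rfl⟩

def pairsToEdges (K : (V × V) × (V × V)) : Sym2 V × Sym2 V := (s(K.1.1, K.1.2), s(K.2.1, K.2.2))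

theorem ncard_preimage_pairsToEdges_le (S : Set (Sym2 V × Sym2 V)) :
    (pairsToEdges ⁻¹' S).ncard ≤ S.ncard * 4 := by
  refine ncard_le_ncard_mul_of_fibres (f := pairsToEdges) (fun K hK => hK) fun z _ => ?_
  have hsub : pairsToEdges ⁻¹' S ∩ pairsToEdges ⁻¹' {z} ⊆
      {A : V × V | s(A.1, A.2) = z.1} ×ˢ {B : V × V | s(B.1, B.2) = z.2} := by
    rintro K ⟨-, rfl⟩
    exact ⟨rfl, rfl⟩
  refine (ncard_le_ncard hsub).trans ?_
  rw [ncard_prod]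
  exact Nat.mul_le_mul (ncard_sym2Mk_fibre_le _) (ncard_sym2Mk_fibre_le _)

variable (χ : Sym2 V → C)

def sameColourEdgePairs : Set (Sym2 V × Sym2 V) :=
  {K | ¬K.1.IsDiag ∧ ¬K.2.IsDiag ∧ χ K.1 = χ K.2}

variable {χ} {k : ℕ} (hχ : ∀ c : C, {e : Sym2 V | ¬ e.IsDiag ∧ χ e = c}.ncard ≤ k)
include hχ

theorem two_mul_ncard_sameColourEdgePairs_le :
    2 * (sameColourEdgePairs χ).ncard ≤ Fintype.card V ^ 2 * k := by
  classical
  have hA : {P : Sym2 V | ¬P.IsDiag}.ncard = (Fintype.card V).choose 2 := by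
    rw [← Nat.card_coe_set_eq, Nat.card_eq_fintype_card, ← Sym2.card_subtype_not_diag]
    rfl
  have hK : (sameColourEdgePairs χ).ncard ≤ (Fintype.card V).choose 2 * k := by
    rw [← hA]
    refine ncard_le_ncard_mul_of_subset_sigma (F := fun P => {Q | ¬Q.IsDiag ∧ χ Q = χ P})
      ?_ fun P _ => hχ _
    rintro K ⟨h₁, h₂, h⟩
    exact ⟨h₁, h₂, h.symm⟩
  have hC : 2 * (Fintype.card V).choose 2 ≤ Fintype.card V ^ 2 := by
    rw [Nat.choose_two_right, sq]
    exact (Nat.mul_div_le _ 2).trans (Nat.mul_le_mul_left _ (Nat.sub_le _ 1))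
  nlinarith

theorem ncard_sameColourEdgePairs_inter_le (u : V) :
    (sameColourEdgePairs χ ∩ {K | u ∈ K.1 ∨ u ∈ K.2}).ncard ≤
      2 * Fintype.card V * k := by
  set S := sameColourEdgePairs χ ∩ {K | u ∈ K.1}
  have hS : S.ncard ≤ Fintype.card V * k := by
    refine (ncard_le_ncard_mul_of_subset_sigma (F := fun P => {Q | ¬Q.IsDiag ∧ χ Q = χ P})
      ?_ fun P _ => hχ _).trans (Nat.mul_le_mul_right _ (ncard_setOf_mem_le u))
    rintro K ⟨⟨-, h₂, h⟩, hu⟩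
    exact ⟨hu, h₂, h.symm⟩
  have hsub :
      sameColourEdgePairs χ ∩ {K | u ∈ K.1 ∨ u ∈ K.2} ⊆ S ∪ Prod.swap ⁻¹' S := by
    rintro K ⟨⟨h₁, h₂, h⟩, hu | hu⟩
    exacts [Or.inl ⟨⟨h₁, h₂, h⟩, hu⟩, Or.inr ⟨⟨h₂, h₁, h.symm⟩, hu⟩]
  calc _ ≤ _ := ncard_le_ncard hsub
    _ ≤ _ := ncard_union_le _ _
    _ ≤ 2 * Fintype.card V * k := by rw [ncard_preimage_swap]; linarith

end Colouring

namespace BadEvent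

def gEdges (Y : BadEvent n G χ) : (Fin n × Fin n) × (Fin n × Fin n) :=
  ((Y.e1, Y.e2), (Y.f1, Y.f2))

def kPairs (Y : BadEvent n G χ) : (Fin n × Fin n) × (Fin n × Fin n) :=
  ((Y.a1, Y.a2), (Y.b1, Y.b2))

def kEdges (Y : BadEvent n G χ) : Sym2 (Fin n) × Sym2 (Fin n) :=
  (s(Y.a1, Y.a2), s(Y.b1, Y.b2))

theorem gEdges_mem_lexEdgePairs (Y : BadEvent n G χ) : Y.gEdges ∈ G.lexEdgePairs :=
  ⟨⟨⟨Y.he, Y.he_lt⟩, Y.hf, Y.hf_lt⟩, Prod.Lex.toLex_lt_toLex.2 Y.hlex⟩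

theorem kEdges_mem_sameColourEdgePairs (Y : BadEvent n G χ) :
    Y.kEdges ∈ sameColourEdgePairs χ :=
  ⟨Sym2.mk_isDiag_iff.not.2 Y.ha, Sym2.mk_isDiag_iff.not.2 Y.hb, Y.hcol⟩

theorem mem_Gverts_iff {Y : BadEvent n G χ} {x : Fin n} :
    x ∈ Y.Gverts ↔ Y.gEdges ∈ edgePairsThrough x := by
  simp [Gverts, gEdges, edgePairsThrough, or_assoc]

theorem mem_Kverts_iff {Y : BadEvent n G χ} {u : Fin n} :
    u ∈ Y.Kverts ↔ u ∈ Y.kEdges.1 ∨ u ∈ Y.kEdges.2 := by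
  simp [Kverts, kEdges, or_assoc]

theorem isIntersectingType_iff {Y : BadEvent n G χ} :
    Y.IsIntersectingType ↔ Y.gEdges ∈ meetingEdgePairs := by
  simp only [IsIntersectingType, gEdges, meetingEdgePairs, mem_ofPred_eq, Sym2.mem_iff]
  constructor
  · rintro (h | h | h | h)
    exacts [⟨_, .inl rfl, .inl h⟩, ⟨_, .inl rfl, .inr h⟩, ⟨_, .inr rfl, .inl h⟩,
      ⟨_, .inr rfl, .inr h⟩]
  · rintro ⟨v, h₁ | h₁, h₂ | h₂⟩ <;> rw [h₁] at h₂ <;> simp [h₂]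

theorem injective_gEdges_kPairs :
    Function.Injective fun Y : BadEvent n G χ => (Y.gEdges, Y.kPairs) := by
  rintro ⟨⟩ ⟨⟩ h
  simp_all [gEdges, kPairs]

instance : Finite (BadEvent n G χ) := Finite.of_injective _ injective_gEdges_kPairs

theorem injOn_gEdges_kEdges :
    InjOn (fun Y : BadEvent n G χ => (Y.gEdges, Y.kEdges)) {Y | Y.IsIntersectingType} := by
  intro Y hY Y' _ h
  apply injective_gEdges_kPairs
  simp only [gEdges, kEdges, kPairs, Prod.mk.injEq, Sym2.eq_iff] at h ⊢
  obtain ⟨⟨⟨he1, he2⟩, hf1, hf2⟩, ha, hb⟩ := h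
  obtain ⟨σ, hσe1, hσe2, hσf1, hσf2⟩ := Y.hex
  obtain ⟨σ', hσ'e1, hσ'e2, hσ'f1, hσ'f2⟩ := Y'.hex
  simp only [IsIntersectingType] at hY
  -- Injectivity of `σ` and `σ'` turns the coincidence `e_i = f_j` into `a_i = b_j`; as the two
  -- `K_n`-edges are distinct and share this vertex, neither can be flipped between `Y` and `Y'`.
  grind [σ.injective, σ'.injective, Y.he_lt, Y.hf_lt, Y.hlex]

theorem isClique_setOf_mem_Gverts (x : Fin n) :
    (intersectionGraph n G χ).IsClique {Y | x ∈ Y.Gverts} :=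
  fun _ hY _ hZ hYZ => ⟨hYZ, Or.inl ⟨x, Finset.mem_inter.2 ⟨hY, hZ⟩⟩⟩

theorem isClique_setOf_mem_Kverts (u : Fin n) :
    (intersectionGraph n G χ).IsClique {Y | u ∈ Y.Kverts} :=
  fun _ hY _ hZ hYZ => ⟨hYZ, Or.inr ⟨u, Finset.mem_inter.2 ⟨hY, hZ⟩⟩⟩

variable [DecidableRel G.Adj] {k : ℕ}
  (hχ : ∀ c : C, {e : Sym2 (Fin n) | ¬ e.IsDiag ∧ χ e = c}.ncard ≤ k)
include hχ

theorem ncard_mem_Gverts_le (x : Fin n) :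
    {Y : BadEvent n G χ | x ∈ Y.Gverts}.ncard ≤ G.maxDegree ^ 2 * n ^ 3 * k := by
  have hE := G.two_mul_ncard_lexEdgePairs_inter_edgePairsThrough_le x
  have hK := ncard_preimage_pairsToEdges_le (sameColourEdgePairs χ)
  have hC := two_mul_ncard_sameColourEdgePairs_le hχ
  rw [Fintype.card_fin] at hE hC
  refine (ncard_le_ncard_mul_ncard_of_injOn (f := gEdges) (g := kPairs)
    (A := G.lexEdgePairs ∩ edgePairsThrough x) (B := pairsToEdges ⁻¹' sameColourEdgePairs χ)
    (fun Y hY => ⟨Y.gEdges_mem_lexEdgePairs, mem_Gverts_iff.1 hY⟩)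
    (fun Y _ => Y.kEdges_mem_sameColourEdgePairs) injective_gEdges_kPairs.injOn).trans ?_
  nlinarith [Nat.mul_le_mul hE hC]

theorem two_mul_ncard_mem_Gverts_inter_isIntersectingType_le (x : Fin n) :
    2 * ({Y : BadEvent n G χ | x ∈ Y.Gverts} ∩ {Y | Y.IsIntersectingType}).ncard ≤
      3 * G.maxDegree ^ 2 * n ^ 2 * k := by
  have hE := G.two_mul_ncard_lexEdgePairs_inter_meetingEdgePairs_inter_edgePairsThrough_le x
  have hK := two_mul_ncard_sameColourEdgePairs_le hχ
  rw [Fintype.card_fin] at hK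
  refine Nat.mul_le_mul_left 2 (ncard_le_ncard_mul_ncard_of_injOn (f := gEdges) (g := kEdges)
    (A := G.lexEdgePairs ∩ meetingEdgePairs ∩ edgePairsThrough x) (B := sameColourEdgePairs χ)
    (fun Y hY => ⟨⟨Y.gEdges_mem_lexEdgePairs, isIntersectingType_iff.1 hY.2⟩,
      mem_Gverts_iff.1 hY.1⟩)
    (fun Y _ => Y.kEdges_mem_sameColourEdgePairs)
    (injOn_gEdges_kEdges.mono inter_subset_right)) |>.trans ?_
  nlinarith [Nat.mul_le_mul hE hK]

theorem ncard_mem_Kverts_inter_isIntersectingType_le (u : Fin n) :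
    ({Y : BadEvent n G χ | u ∈ Y.Kverts} ∩ {Y | Y.IsIntersectingType}).ncard ≤
      G.maxDegree ^ 2 * n ^ 2 * k := by
  have hE := G.two_mul_ncard_lexEdgePairs_inter_meetingEdgePairs_le
  have hK := ncard_sameColourEdgePairs_inter_le hχ u
  rw [Fintype.card_fin] at hE hK
  refine (ncard_le_ncard_mul_ncard_of_injOn (f := gEdges) (g := kEdges)
    (A := G.lexEdgePairs ∩ meetingEdgePairs)
    (B := sameColourEdgePairs χ ∩ {K | u ∈ K.1 ∨ u ∈ K.2})
    (fun Y hY => ⟨Y.gEdges_mem_lexEdgePairs, isIntersectingType_iff.1 hY.2⟩)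
    (fun Y hY => ⟨Y.kEdges_mem_sameColourEdgePairs, mem_Kverts_iff.1 hY.1⟩)
    (injOn_gEdges_kEdges.mono inter_subset_right)).trans ?_
  nlinarith [Nat.mul_le_mul hE hK]

theorem ncard_mem_Kverts_le (u : Fin n) :
    {Y : BadEvent n G χ | u ∈ Y.Kverts}.ncard ≤ G.maxDegree ^ 2 * n ^ 3 * k := by
  have hE := G.eight_mul_ncard_lexEdgePairs_le
  have hK := (ncard_preimage_pairsToEdges_le _).trans
    (Nat.mul_le_mul_right 4 (ncard_sameColourEdgePairs_inter_le hχ u))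
  rw [Fintype.card_fin] at hE hK
  refine (ncard_le_ncard_mul_ncard_of_injOn (f := gEdges) (g := kPairs) (A := G.lexEdgePairs)
    (B := pairsToEdges ⁻¹' (sameColourEdgePairs χ ∩ {K | u ∈ K.1 ∨ u ∈ K.2}))
    (fun Y _ => Y.gEdges_mem_lexEdgePairs)
    (fun Y hY => ⟨Y.kEdges_mem_sameColourEdgePairs, mem_Kverts_iff.1 hY⟩)
    injective_gEdges_kPairs.injOn).trans ?_
  nlinarith [Nat.mul_le_mul hE hK]

end BadEvent

theorem badEvent_neighbourhood_clique_decomposition_general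
    [DecidableRel G.Adj] {Δ k : ℕ}
    (hΔ : G.maxDegree = Δ)
    (hχ : ∀ c : C, {e : Sym2 (Fin n) | ¬ e.IsDiag ∧ χ e = c}.ncard ≤ k)
    (X : BadEvent n G χ) :
    (∀ x ∈ X.Gverts,
      (intersectionGraph n G χ).IsClique
        ({X} ∪ {Y : BadEvent n G χ | x ∈ Y.Gverts}) ∧
      (((({X} ∪ {Y : BadEvent n G χ | x ∈ Y.Gverts}) ∩
          {Y : BadEvent n G χ | Y.IsIntersectingType}).ncard : ℝ) ≤
        3/2 * (Δ : ℝ)^2 * (n : ℝ)^2 * (k : ℝ)) ∧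
      ((({X} ∪ {Y : BadEvent n G χ | x ∈ Y.Gverts}) ∩
          {Y : BadEvent n G χ | ¬ Y.IsIntersectingType}).ncard ≤ Δ^2 * n^3 * k)) ∧
    (∀ u ∈ X.Kverts,
      (intersectionGraph n G χ).IsClique {Y : BadEvent n G χ | u ∈ Y.Kverts} ∧
      (({Y : BadEvent n G χ | u ∈ Y.Kverts} ∩
          {Y : BadEvent n G χ | Y.IsIntersectingType}).ncard ≤ Δ^2 * n^2 * k) ∧
      (({Y : BadEvent n G χ | u ∈ Y.Kverts} ∩
          {Y : BadEvent n G χ | ¬ Y.IsIntersectingType}).ncard ≤ Δ^2 * n^3 * k)) := by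
  subst hΔ
  refine ⟨fun x hx => ?_, fun u _ => ?_⟩
  · have hX : {X} ⊆ {Y : BadEvent n G χ | x ∈ Y.Gverts} := singleton_subset_iff.2 hx
    rw [union_eq_self_of_subset_left hX]
    have hint := Nat.cast_le (α := ℝ) |>.2 <|
      BadEvent.two_mul_ncard_mem_Gverts_inter_isIntersectingType_le (G := G) hχ x
    push_cast at hint
    exact ⟨BadEvent.isClique_setOf_mem_Gverts x, by linarith,
      (ncard_le_ncard inter_subset_left).trans (BadEvent.ncard_mem_Gverts_le hχ x)⟩
  · exact ⟨BadEvent.isClique_setOf_mem_Kverts u,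
      BadEvent.ncard_mem_Kverts_inter_isIntersectingType_le hχ u,
      (ncard_le_ncard inter_subset_left).trans (BadEvent.ncard_mem_Kverts_le hχ u)⟩

/-- **Claim 13** of Böttcher–Kohayakawa–Procacci.  Let `G` be a graph on `[n]` with maximum
degree `Δ > 0` and let `χ` be a `k`-bounded edge colouring of `K_n`.  For every bad event
`X`: (1) for each vertex `x ∈ e ∪ f`, the set of `X` together with all bad events whose
`G`-edge vertex set contains `x` is a clique in the intersection graph `D'`, containing at
most `(3/2)·Δ²·n²·k` events of intersecting type and at most `Δ²·n³·k` events of disjoint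
type; (2) for each vertex `u ∈ a ∪ b`, the set of all bad events whose `K_n`-edge vertex
set contains `u` is a clique in `D'`, containing at most `Δ²·n²·k` events of intersecting
type and at most `Δ²·n³·k` events of disjoint type. -/
theorem badEvent_neighbourhood_clique_decomposition
    [DecidableRel G.Adj] {Δ k : ℕ}
    (hΔ : G.maxDegree = Δ) (hΔpos : 0 < Δ)
    (hχ : ∀ c : C, {e : Sym2 (Fin n) | ¬ e.IsDiag ∧ χ e = c}.ncard ≤ k)
    (X : BadEvent n G χ) :
    (∀ x ∈ X.Gverts,
      (intersectionGraph n G χ).IsClique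
        ({X} ∪ {Y : BadEvent n G χ | x ∈ Y.Gverts}) ∧
      (((({X} ∪ {Y : BadEvent n G χ | x ∈ Y.Gverts}) ∩
          {Y : BadEvent n G χ | Y.IsIntersectingType}).ncard : ℝ) ≤
        3/2 * (Δ : ℝ)^2 * (n : ℝ)^2 * (k : ℝ)) ∧
      ((({X} ∪ {Y : BadEvent n G χ | x ∈ Y.Gverts}) ∩
          {Y : BadEvent n G χ | ¬ Y.IsIntersectingType}).ncard ≤ Δ^2 * n^3 * k)) ∧
    (∀ u ∈ X.Kverts,
      (intersectionGraph n G χ).IsClique {Y : BadEvent n G χ | u ∈ Y.Kverts} ∧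
      (({Y : BadEvent n G χ | u ∈ Y.Kverts} ∩
          {Y : BadEvent n G χ | Y.IsIntersectingType}).ncard ≤ Δ^2 * n^2 * k) ∧
      (({Y : BadEvent n G χ | u ∈ Y.Kverts} ∩
          {Y : BadEvent n G χ | ¬ Y.IsIntersectingType}).ncard ≤ Δ^2 * n^3 * k)) :=
  badEvent_neighbourhood_clique_decomposition_general hΔ hχ X
end
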